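/- arXiv:1111.3573 — 2 statements merged into one kernel-verified Lean document; each statement's English description precedes it below -/
import Mathlib

section
/- For all real ℓ ≥ 2·arcsinh(1), the area of a hyperbolic disk of radius r(ℓ)/2, namely 2π(cosh(r(ℓ)/2) − 1) where r(ℓ) = arcsinh(1/(2·sinh(ℓ/4))), satisfies 2π(cosh(r(ℓ)/2) − 1) > (π/4)·exp(−ℓ/2). -/
/-!
A hyperbolic disk has at least the Euclidean area `π ρ²` (as `cosh ρ - 1 ≥ ρ² / 2`), so the
left-hand side is at least `(π / 4) r²`. From `sinh r = 1 / (2 sinh (ℓ / 4))` one gets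
`tanh² r = 1 / (1 + 4 sinh² (ℓ / 4)) = 1 / (2 cosh (ℓ / 2) - 1)`, and `r ≥ tanh r` together with
`2 cosh x - 1 = eˣ + e⁻ˣ - 1 < eˣ` for `x > 0` gives `r² > e^(-ℓ/2)`.
-/

open Real Set

namespace Real

theorem sinh_le_mul_cosh {x : ℝ} (hx : 0 ≤ x) : sinh x ≤ x * cosh x := by
  have hmono : MonotoneOn (fun y => y * cosh y - sinh y) (Ici 0) := by
    refine monotoneOn_of_deriv_nonneg (convex_Ici 0) (by fun_prop) (by fun_prop) fun y hy => ?_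
    rw [interior_Ici, mem_Ioi] at hy
    have hderiv : HasDerivAt (fun y => y * cosh y - sinh y) (y * sinh y) y := by
      refine (((hasDerivAt_id' y).mul (hasDerivAt_cosh y)).sub (hasDerivAt_sinh y)).congr_deriv ?_
      ring
    rw [hderiv.deriv]
    exact mul_nonneg hy.le (sinh_nonneg_iff.mpr hy.le)
  simpa using hmono self_mem_Ici (mem_Ici.mpr hx) hx

theorem tanh_le_self {x : ℝ} (hx : 0 ≤ x) : tanh x ≤ x := by
  rw [tanh_eq_sinh_div_cosh, div_le_iff₀ (cosh_pos x)]
  exact sinh_le_mul_cosh hx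

theorem tanh_nonneg {x : ℝ} (hx : 0 ≤ x) : 0 ≤ tanh x := by
  rw [tanh_eq_sinh_div_cosh]
  exact div_nonneg (sinh_nonneg_iff.mpr hx) (cosh_pos x).le

theorem one_add_sq_two_mul_sinh_half (x : ℝ) : 1 + (2 * sinh (x / 2)) ^ 2 = 2 * cosh x - 1 := by
  have h := cosh_two_mul (x / 2)
  rw [mul_div_cancel₀ x two_ne_zero, cosh_sq] at h
  linarith

theorem sq_div_two_le_cosh_sub_one (x : ℝ) : x ^ 2 / 2 ≤ cosh x - 1 := by
  have hsinh : (x / 2) ^ 2 ≤ sinh (x / 2) ^ 2 := by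
    rw [← sq_abs (sinh _), abs_sinh, ← sq_abs (x / 2)]
    gcongr
    exact self_le_sinh_iff.mpr (abs_nonneg _)
  linarith [one_add_sq_two_mul_sinh_half x]

theorem tanh_arsinh_inv_sq {y : ℝ} (hy : y ≠ 0) : tanh (arsinh y⁻¹) ^ 2 = (1 + y ^ 2)⁻¹ := by
  rw [tanh_arsinh, div_pow, sq_sqrt (by positivity)]
  field_simp
  ring

theorem two_mul_cosh_sub_one_lt_exp {x : ℝ} (hx : 0 < x) : 2 * cosh x - 1 < exp x := by
  have : exp (-x) < 1 := exp_lt_one_iff.mpr (neg_lt_zero.mpr hx)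
  rw [cosh_eq]
  linarith

end Real

theorem area_small_disk_lower_bound (ℓ : ℝ) (hℓ : 2 * Real.arsinh 1 ≤ ℓ) :
    2 * Real.pi * (Real.cosh (Real.arsinh (1 / (2 * Real.sinh (ℓ / 4))) / 2) - 1) >
      Real.pi / 4 * Real.exp (-ℓ / 2) := by
  have hℓ_pos : 0 < ℓ := (mul_pos two_pos (arsinh_pos_iff.mpr one_pos)).trans_le hℓ
  have htanh_sq : tanh (arsinh (1 / (2 * sinh (ℓ / 4)))) ^ 2 = (2 * cosh (ℓ / 2) - 1)⁻¹ := by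
    rw [one_div, tanh_arsinh_inv_sq (by positivity), ← one_add_sq_two_mul_sinh_half,
      div_div, show (2 : ℝ) * 2 = 4 by norm_num]
  set r := arsinh (1 / (2 * sinh (ℓ / 4)))
  have hr : 0 ≤ r := arsinh_nonneg_iff.mpr (by positivity)
  calc π / 4 * exp (-ℓ / 2) = π / 4 * (exp (ℓ / 2))⁻¹ := by rw [neg_div, exp_neg]
    _ < π / 4 * tanh r ^ 2 := by
      rw [htanh_sq]
      gcongr
      · linarith [one_le_cosh (ℓ / 2)]
      · exact two_mul_cosh_sub_one_lt_exp (by positivity)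
    _ ≤ π / 4 * r ^ 2 := by
      gcongr
      · exact tanh_nonneg hr
      · exact tanh_le_self hr
    _ = 2 * π * ((r / 2) ^ 2 / 2) := by ring
    _ ≤ 2 * π * (cosh (r / 2) - 1) := by
      gcongr
      exact sq_div_two_le_cosh_sub_one (r / 2)
end

section
/- If ℓ ≤ 2·log(g) + C for a constant C > 0 and g ≥ 2, then θ_ℓ = arcsin(1/(2·cosh(ℓ/4))) satisfies θ_ℓ ≥ c/√g for some constant c > 0 depending only on C; consequently at most ⌊2π/θ_ℓ⌋ ≤ C'·√g systoles of a hyperbolic surface can pass through a single point, for some constant C' depending only on C. -/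
/-! Since `sin t ≤ t` for `t ≥ 0`, the angle `arcsin (1 / (2 cosh (ℓ / 4)))` is at least
`1 / (2 cosh (ℓ / 4)) ≥ exp (-ℓ / 4) / 2`, and `ℓ ≤ 2 log g + C` makes `exp (-ℓ / 4)` at least
`exp (-C / 4) / √g`. The bound on `2π / θ_ℓ` is the reciprocal of this one. -/

namespace Real

lemma self_le_arcsin {x : ℝ} (hx₀ : 0 ≤ x) (hx₁ : x ≤ 1) : x ≤ arcsin x := by
  have h := sin_le (arcsin_nonneg.mpr hx₀)
  rwa [sin_arcsin (by linarith) hx₁] at h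

lemma cosh_le_exp_abs (x : ℝ) : cosh x ≤ exp |x| := by
  rw [← cosh_abs, cosh_eq]
  have : exp (-|x|) ≤ exp |x| := exp_le_exp.mpr (by linarith [abs_nonneg x])
  linarith

lemma exp_neg_abs_div_two_le_arcsin_one_div_two_mul_cosh (x : ℝ) :
    exp (-|x|) / 2 ≤ arcsin (1 / (2 * cosh x)) := by
  have hcosh : 1 ≤ cosh x := one_le_cosh x
  have hle : exp (-|x|) / 2 ≤ 1 / (2 * cosh x) := by
    rw [exp_neg, inv_div_left, ← one_div, one_div_le_one_div (by positivity) (by positivity)]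
    gcongr
    exact cosh_le_exp_abs x
  refine hle.trans (self_le_arcsin (by positivity) ?_)
  rw [div_le_one (by positivity)]
  linarith

lemma exp_neg_div_four_div_sqrt_le_exp_neg_div_four {g ℓ C : ℝ} (hg : 0 < g)
    (hℓ : ℓ ≤ 2 * log g + C) : exp (-(C / 4)) / √g ≤ exp (-(ℓ / 4)) := by
  rw [← exp_log hg, ← exp_half, ← exp_sub, exp_le_exp]
  linarith

end Real

open Real in
theorem systoles_through_a_point_general (C : ℝ) :
    ∃ c : ℝ, 0 < c ∧ ∃ C' : ℝ, 0 < C' ∧ ∀ g : ℕ, 2 ≤ g → ∀ ℓ : ℝ, 0 < ℓ →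
      ℓ ≤ 2 * Real.log g + C →
        Real.arcsin (1 / (2 * Real.cosh (ℓ / 4))) ≥ c / Real.sqrt g ∧
          2 * Real.pi / Real.arcsin (1 / (2 * Real.cosh (ℓ / 4))) ≤ C' * Real.sqrt g := by
  set c := exp (-(C / 4)) / 2
  have hc : 0 < c := by positivity
  refine ⟨c, hc, 2 * π / c, by positivity, fun g hg ℓ hℓ hℓg => ?_⟩
  have hg₀ : (0 : ℝ) < g := by positivity
  have hθ : c / √g ≤ arcsin (1 / (2 * cosh (ℓ / 4))) := by
    calc c / √g = exp (-(C / 4)) / √g / 2 := div_right_comm _ _ _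
      _ ≤ exp (-|ℓ / 4|) / 2 := by
        rw [abs_of_pos (by positivity)]
        gcongr
        exact exp_neg_div_four_div_sqrt_le_exp_neg_div_four hg₀ hℓg
      _ ≤ _ := exp_neg_abs_div_two_le_arcsin_one_div_two_mul_cosh _
  refine ⟨hθ, ?_⟩
  calc 2 * π / arcsin (1 / (2 * cosh (ℓ / 4))) ≤ 2 * π / (c / √g) := by gcongr
    _ = 2 * π / c * √g := by field_simp

theorem systoles_through_a_point (C : ℝ) (hC : 0 < C) :
    ∃ c : ℝ, 0 < c ∧ ∃ C' : ℝ, 0 < C' ∧ ∀ g : ℕ, 2 ≤ g → ∀ ℓ : ℝ, 0 < ℓ →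
      ℓ ≤ 2 * Real.log g + C →
        Real.arcsin (1 / (2 * Real.cosh (ℓ / 4))) ≥ c / Real.sqrt g ∧
          2 * Real.pi / Real.arcsin (1 / (2 * Real.cosh (ℓ / 4))) ≤ C' * Real.sqrt g :=
  systoles_through_a_point_general C
end
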